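/- For every A > 0, the metric space (X_A, d), where d(a,b) = max_i |log a_i − log b_i|, is complete: every Cauchy sequence in X_A converges to a point of X_A. -/
import Mathlib


open Set Filter

noncomputable section

/-- The edge model `X_A`: triples of positive reals satisfying the strict triangle
inequalities and having Heron area `A`. -/
def X (A : ℝ) : Set (Fin 3 → ℝ) :=
  {a | (∀ i, 0 < a i) ∧
    (∀ i j k : Fin 3, i ≠ j → j ≠ k → i ≠ k → a i < a j + a k) ∧
    Real.sqrt ((a 0 + a 1 + a 2) * (-a 0 + a 1 + a 2) *
      (a 0 - a 1 + a 2) * (a 0 + a 1 - a 2)) / 4 = A}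

/-- The non-obtuse part `X_A^no`. -/
def XNo (A : ℝ) : Set (Fin 3 → ℝ) :=
  {a | a ∈ X A ∧ ∀ i j k : Fin 3, i ≠ j → j ≠ k → i ≠ k → a i ^ 2 ≤ a j ^ 2 + a k ^ 2}

/-- The acute part `X_A^ac`. -/
def XAc (A : ℝ) : Set (Fin 3 → ℝ) :=
  {a | a ∈ X A ∧ ∀ i j k : Fin 3, i ≠ j → j ≠ k → i ≠ k → a i ^ 2 < a j ^ 2 + a k ^ 2}

/-- The distance `d(a,b) = max_i |log a_i - log b_i|` on the edge model. -/
def dd (a b : Fin 3 → ℝ) : ℝ :=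
  max |Real.log (a 0) - Real.log (b 0)|
    (max |Real.log (a 1) - Real.log (b 1)| |Real.log (a 2) - Real.log (b 2)|)

/-- The angle at vertex `i` of the triangle with edge lengths `a`, by the law of cosines. -/
def thetaA (a : Fin 3 → ℝ) (i : Fin 3) : ℝ :=
  Real.arccos ((a (i + 1) ^ 2 + a (i + 2) ^ 2 - a i ^ 2) / (2 * a (i + 1) * a (i + 2)))

lemma tri_aux (a : Fin 3 → ℝ) (h1 : a 0 < a 1 + a 2) (h2 : a 1 < a 0 + a 2)
    (h3 : a 2 < a 0 + a 1) :
    ∀ i j k : Fin 3, i ≠ j → j ≠ k → i ≠ k → a i < a j + a k := by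
  intro i j k hij hjk hik
  fin_cases i <;> fin_cases j <;> fin_cases k <;> simp_all <;> linarith

/-- `(X_A, d)` is complete: every Cauchy sequence converges to a point of `X_A`. -/
theorem stmt9 (A : ℝ) (hA : 0 < A)
    (u : ℕ → (Fin 3 → ℝ)) (hu : ∀ n, u n ∈ X A)
    (hcauchy : ∀ ε : ℝ, 0 < ε → ∃ N : ℕ, ∀ m ≥ N, ∀ n ≥ N, dd (u m) (u n) < ε) :
    ∃ a ∈ X A, Tendsto (fun n => dd (u n) a) atTop (nhds 0) := by

  have hpos : ∀ n i, 0 < u n i := fun n => (hu n).1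
  -- each coordinate's log is a Cauchy sequence
  have hlogC : ∀ i : Fin 3, CauchySeq (fun n => Real.log (u n i)) := by
    intro i
    rw [Metric.cauchySeq_iff]
    intro ε hε
    obtain ⟨N, hN⟩ := hcauchy ε hε
    refine ⟨N, fun m hm n hn => ?_⟩
    have h := hN m hm n hn
    have hle : |Real.log (u m i) - Real.log (u n i)| ≤ dd (u m) (u n) := by
      fin_cases i
      · exact le_max_left _ _
      · exact le_trans (le_max_left _ _) (le_max_right _ _)
      · exact le_trans (le_max_right _ _) (le_max_right _ _)
    rw [Real.dist_eq]
    exact lt_of_le_of_lt hle h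
  have hex : ∀ i : Fin 3, ∃ l : ℝ, Tendsto (fun n => Real.log (u n i)) atTop (nhds l) :=
    fun i => cauchySeq_tendsto_of_complete (hlogC i)
  choose L hL using hex
  set a : Fin 3 → ℝ := fun i => Real.exp (L i) with ha
  have hapos : ∀ i, 0 < a i := fun i => Real.exp_pos _
  have hui : ∀ i, Tendsto (fun n => u n i) atTop (nhds (a i)) := by
    intro i
    have h := (Real.continuous_exp.tendsto (L i)).comp (hL i)
    refine h.congr (fun n => ?_)
    simp [Function.comp, Real.exp_log (hpos n i)]
  -- non-strict triangle inequalities in the limit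
  have htri : ∀ i j k : Fin 3, i ≠ j → j ≠ k → i ≠ k → a i ≤ a j + a k := by
    intro i j k hij hjk hik
    exact le_of_tendsto_of_tendsto' (hui i) ((hui j).add (hui k))
      (fun n => le_of_lt ((hu n).2.1 i j k hij hjk hik))
  -- the Heron area passes to the limit
  have hbig : Tendsto (fun n => Real.sqrt ((u n 0 + u n 1 + u n 2) * (-u n 0 + u n 1 + u n 2) *
      (u n 0 - u n 1 + u n 2) * (u n 0 + u n 1 - u n 2)) / 4) atTop
      (nhds (Real.sqrt ((a 0 + a 1 + a 2) * (-a 0 + a 1 + a 2) *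
      (a 0 - a 1 + a 2) * (a 0 + a 1 - a 2)) / 4)) := by
    have t0 := hui 0; have t1 := hui 1; have t2 := hui 2
    have hprod := ((((t0.add t1).add t2).mul ((t0.neg.add t1).add t2)).mul
      (((t0.sub t1).add t2))).mul ((t0.add t1).sub t2)
    exact (Real.continuous_sqrt.continuousAt.tendsto.comp hprod).div_const 4
  have hAa : Real.sqrt ((a 0 + a 1 + a 2) * (-a 0 + a 1 + a 2) *
      (a 0 - a 1 + a 2) * (a 0 + a 1 - a 2)) / 4 = A := by
    have := hbig.congr (fun n => (hu n).2.2)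
    exact tendsto_nhds_unique this tendsto_const_nhds
  -- positivity of the Heron product
  have hP : 0 < (a 0 + a 1 + a 2) * (-a 0 + a 1 + a 2) * (a 0 - a 1 + a 2) * (a 0 + a 1 - a 2) := by
    rw [← Real.sqrt_pos]
    have : 0 < Real.sqrt ((a 0 + a 1 + a 2) * (-a 0 + a 1 + a 2) *
        (a 0 - a 1 + a 2) * (a 0 + a 1 - a 2)) / 4 := hAa ▸ hA
    linarith
  have hf1 : (0:ℝ) ≤ -a 0 + a 1 + a 2 := by
    have := htri 0 1 2 (by decide) (by decide) (by decide); linarith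
  have hf2 : (0:ℝ) ≤ a 0 - a 1 + a 2 := by
    have := htri 1 0 2 (by decide) (by decide) (by decide); linarith
  have hf3 : (0:ℝ) ≤ a 0 + a 1 - a 2 := by
    have := htri 2 0 1 (by decide) (by decide) (by decide); linarith
  have hg1 : (0:ℝ) < -a 0 + a 1 + a 2 := by
    rcases hf1.lt_or_eq with h | h
    · exact h
    · exfalso
      have : (a 0 + a 1 + a 2) * (-a 0 + a 1 + a 2) * (a 0 - a 1 + a 2) * (a 0 + a 1 - a 2) = 0 := by
        rw [← h]; ring
      linarith
  have hg2 : (0:ℝ) < a 0 - a 1 + a 2 := by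
    rcases hf2.lt_or_eq with h | h
    · exact h
    · exfalso
      have : (a 0 + a 1 + a 2) * (-a 0 + a 1 + a 2) * (a 0 - a 1 + a 2) * (a 0 + a 1 - a 2) = 0 := by
        rw [← h]; ring
      linarith
  have hg3 : (0:ℝ) < a 0 + a 1 - a 2 := by
    rcases hf3.lt_or_eq with h | h
    · exact h
    · exfalso
      have : (a 0 + a 1 + a 2) * (-a 0 + a 1 + a 2) * (a 0 - a 1 + a 2) * (a 0 + a 1 - a 2) = 0 := by
        rw [← h]; ring
      linarith
  have hstri : ∀ i j k : Fin 3, i ≠ j → j ≠ k → i ≠ k → a i < a j + a k :=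
    tri_aux a (by linarith) (by linarith) (by linarith)
  refine ⟨a, ⟨hapos, hstri, hAa⟩, ?_⟩
  -- convergence in the distance dd
  have habs : ∀ i : Fin 3, Tendsto (fun n => |Real.log (u n i) - Real.log (a i)|)
      atTop (nhds 0) := by
    intro i
    have hla : Real.log (a i) = L i := Real.log_exp _
    have h1 : Tendsto (fun n => Real.log (u n i) - Real.log (a i)) atTop (nhds 0) := by
      rw [hla]
      simpa using (hL i).sub (tendsto_const_nhds (x := L i))
    simpa using h1.abs
  have := (habs 0).max ((habs 1).max (habs 2))
  simpa [dd] using this
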